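/- arXiv:1910.00926 — 2 statements merged into one kernel-verified Lean document; each statement's English description precedes it below -/
import Mathlib

section
/- Let X be a Polish space and A ⊆ X a Δ⁰₂ set. Define transfinite sequences of sets F_η, H_η ⊆ X by recursion: F_0 = X, H_η = closure(F_η \ A), F_{η+1} = H_η ∩ closure(F_η ∩ A), and F_λ = ⋂_{η<λ} F_η for limit ordinals λ. Then there exists a countable ordinal θ < ω₁ such that F_θ = ∅, and for this θ one has A = ⋃_{η<θ} (F_η \ H_η). Moreover F_0 ⊇ H_0 ⊇ F_1 ⊇ H_1 ⊇ ⋯ ⊇ F_η ⊇ H_η ⊇ ⋯ is a decreasing sequence of closed sets. -/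
/-!
The sets `F η` are closed and decrease. In a second-countable space such a sequence is
stationary before `ω₁`: every strict drop `F θ ⊋ F (θ + 1)` is witnessed by a basic open set
meeting `F θ` but not `F (θ + 1)`, and different drops need different basic sets. At a
stationary stage, `F θ ∩ A` and `F θ \ A` are both dense in the Polish space `F θ`; being Gδ,
Baire's theorem makes them meet unless `F θ = ∅`. Finally, a point `x ∈ A` leaves the
sequence at a successor stage `η + 1` with `x ∈ F η`, and there `x ∉ H η`.
-/

open Set

theorem isEmpty_of_dense_of_dense_compl {Y : Type*} [TopologicalSpace Y] [BaireSpace Y]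
    {A : Set Y} (hA : IsGδ A) (hAc : IsGδ Aᶜ) (hd : Dense A) (hdc : Dense Aᶜ) : IsEmpty Y := by
  have hempty : Dense (A ∩ Aᶜ) := hd.inter_of_Gδ hA hAc hdc
  exact ⟨fun y => by simpa using hempty y⟩

theorem IsClosed.eq_empty_of_subset_closure_inter_of_subset_closure_diff {X : Type*}
    [TopologicalSpace X] [PolishSpace X] {A C : Set X} (hA : IsGδ A) (hAc : IsGδ Aᶜ)
    (hC : IsClosed C) (hCA : C ⊆ closure (C ∩ A)) (hCAc : C ⊆ closure (C \ A)) : C = ∅ := by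
  have := hC.polishSpace
  have hd : Dense (Subtype.val ⁻¹' A : Set C) := by
    rwa [Subtype.dense_iff, Subtype.image_preimage_coe]
  have hdc : Dense (Subtype.val ⁻¹' A : Set C)ᶜ := by
    rwa [Subtype.dense_iff, ← preimage_compl, Subtype.image_preimage_coe, ← sdiff_eq]
  exact isEmpty_coe_sort.mp <| isEmpty_of_dense_of_dense_compl
    (hA.preimage continuous_subtype_val) (hAc.preimage continuous_subtype_val) hd hdc

theorem Cardinal.not_countable_Iio_ord_aleph_one : ¬ (Iio (aleph.{u} 1).ord).Countable := by
  rw [← le_aleph0_iff_set_countable, mk_Iio_ordinal, card_ord, not_le, ← lift_aleph0.{u+1, u},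
    lift_lt]
  exact aleph0_lt_aleph_one

theorem exists_lt_ord_aleph_one_add_one_eq {X : Type*} [TopologicalSpace X]
    [SecondCountableTopology X] {F : Ordinal.{u} → Set X} (hclosed : ∀ η, IsClosed (F η))
    (hF : Antitone F) : ∃ θ < (Cardinal.aleph.{u} 1).ord, F (θ + 1) = F θ := by
  by_contra! hne
  have hbasis := TopologicalSpace.isBasis_countableBasis X
  have hU : ∀ θ : Iio (Cardinal.aleph.{u} 1).ord, ∃ U ∈ TopologicalSpace.countableBasis X,
      (U ∩ F θ).Nonempty ∧ Disjoint U (F (θ + 1)) := by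
    rintro ⟨θ, hθ⟩
    obtain ⟨x, hxθ, hx⟩ : (F θ \ F (θ + 1)).Nonempty :=
      sdiff_nonempty.mpr fun h => hne θ hθ (h.antisymm' (hF (Order.le_succ θ)))
    obtain ⟨U, hUb, hxU, hUsub⟩ :=
      hbasis.exists_subset_of_mem_open hx (hclosed (θ + 1)).isOpen_compl
    exact ⟨U, hUb, ⟨x, hxU, hxθ⟩, subset_compl_iff_disjoint_right.mp hUsub⟩
  choose U hUb hUmeets hUdisj using hU
  have hinj : Function.Injective fun θ => (⟨U θ, hUb θ⟩ : TopologicalSpace.countableBasis X) := by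
    refine Function.Injective.of_lt_imp_ne fun θ ξ hlt heq => ?_
    obtain ⟨y, hyU, hyF⟩ := hUmeets ξ
    rw [← show U θ = U ξ from congrArg Subtype.val heq] at hyU
    exact (hUdisj θ).notMem_of_mem_left hyU (hF (Order.add_one_le_of_lt hlt) hyF)
  have := (TopologicalSpace.countable_countableBasis X).to_subtype
  exact Cardinal.not_countable_Iio_ord_aleph_one (countable_coe_iff.mp hinj.countable)

structure IsDifferenceHierarchy {X : Type*} [TopologicalSpace X] (A : Set X)
    (F H : Ordinal.{u} → Set X) : Prop where
  zero_eq : F 0 = univ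
  H_eq : ∀ η, H η = closure (F η \ A)
  add_one_eq : ∀ η, F (η + 1) = H η ∩ closure (F η ∩ A)
  limit_eq : ∀ lam, Order.IsSuccLimit lam → F lam = ⋂ η < lam, F η

namespace IsDifferenceHierarchy

variable {X : Type*} [TopologicalSpace X] {A : Set X} {F H : Ordinal.{u} → Set X}

theorem isClosed_H (h : IsDifferenceHierarchy A F H) (η : Ordinal) : IsClosed (H η) :=
  h.H_eq η ▸ isClosed_closure

theorem isClosed_F (h : IsDifferenceHierarchy A F H) (η : Ordinal) : IsClosed (F η) := by
  induction η using Ordinal.limitRecOn with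
  | zero => exact h.zero_eq ▸ isClosed_univ
  | add_one η _ => exact h.add_one_eq η ▸ (h.isClosed_H η).inter isClosed_closure
  | limit lam hlam ih => exact h.limit_eq lam hlam ▸ isClosed_biInter ih

theorem H_subset_F (h : IsDifferenceHierarchy A F H) (η : Ordinal) : H η ⊆ F η :=
  h.H_eq η ▸ (h.isClosed_F η).closure_subset_iff.mpr sdiff_subset

theorem F_add_one_subset_H (h : IsDifferenceHierarchy A F H) (η : Ordinal) : F (η + 1) ⊆ H η :=
  h.add_one_eq η ▸ inter_subset_left

theorem antitone_F (h : IsDifferenceHierarchy A F H) : Antitone F := by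
  intro η ξ hle
  induction ξ using Ordinal.limitRecOn with
  | zero => rw [nonpos_iff_eq_zero.mp hle]
  | add_one ξ ih =>
    rcases hle.lt_or_eq with hlt | rfl
    · exact ((h.F_add_one_subset_H ξ).trans (h.H_subset_F ξ)).trans
        (ih (Order.lt_add_one_iff.mp hlt))
    · exact subset_rfl
  | limit lam hlam ih =>
    rcases hle.lt_or_eq with hlt | rfl
    · exact h.limit_eq lam hlam ▸ biInter_subset_of_mem hlt
    · exact subset_rfl

theorem eq_empty_of_add_one_eq [PolishSpace X] (h : IsDifferenceHierarchy A F H)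
    (hA : IsGδ A) (hAc : IsGδ Aᶜ) {θ : Ordinal} (hθ : F (θ + 1) = F θ) : F θ = ∅ := by
  have hsub : F θ ⊆ H θ ∩ closure (F θ ∩ A) := hθ ▸ (h.add_one_eq θ).le
  refine (h.isClosed_F θ).eq_empty_of_subset_closure_inter_of_subset_closure_diff hA hAc
    (hsub.trans inter_subset_right) ?_
  exact h.H_eq θ ▸ hsub.trans inter_subset_left

theorem F_diff_H_subset (h : IsDifferenceHierarchy A F H) (η : Ordinal) : F η \ H η ⊆ A :=
  sdiff_subset_comm.mp (h.H_eq η ▸ subset_closure)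

theorem exists_lt_mem_diff_of_mem_of_notMem (h : IsDifferenceHierarchy A F H) {x : X}
    (hx : x ∈ A) {θ : Ordinal} (hθ : x ∉ F θ) : ∃ η < θ, x ∈ F η \ H η := by
  induction θ using Ordinal.limitRecOn with
  | zero => exact absurd (h.zero_eq ▸ mem_univ x) hθ
  | add_one θ ih =>
    by_cases hxθ : x ∈ F θ
    · refine ⟨θ, lt_add_one θ, hxθ, fun hxH => hθ ?_⟩
      exact h.add_one_eq θ ▸ ⟨hxH, subset_closure ⟨hxθ, hx⟩⟩
    · obtain ⟨η, hη, hxη⟩ := ih hxθ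
      exact ⟨η, hη.trans (lt_add_one θ), hxη⟩
  | limit lam hlam ih =>
    rw [h.limit_eq lam hlam, mem_iInter₂] at hθ
    push Not at hθ
    obtain ⟨ξ, hξ, hxξ⟩ := hθ
    obtain ⟨η, hη, hxη⟩ := ih ξ hξ hxξ
    exact ⟨η, hη.trans hξ, hxη⟩

theorem eq_biUnion_diff_of_eq_empty (h : IsDifferenceHierarchy A F H) {θ : Ordinal}
    (hθ : F θ = ∅) : A = ⋃ η < θ, (F η \ H η) := by
  refine subset_antisymm (fun x hx => ?_) (iUnion₂_subset fun η _ => h.F_diff_H_subset η)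
  obtain ⟨η, hη, hxη⟩ := h.exists_lt_mem_diff_of_mem_of_notMem hx (hθ ▸ notMem_empty x)
  exact mem_biUnion hη hxη

end IsDifferenceHierarchy

/-- Difference-hierarchy representation of a Δ⁰₂ set `A` in a Polish space: for the
transfinite sequences `F 0 = univ`, `H η = closure (F η \ A)`,
`F (η+1) = H η ∩ closure (F η ∩ A)`, `F λ = ⋂_{η<λ} F η` at limits, there is a countable
ordinal `θ` with `F θ = ∅` and `A = ⋃_{η<θ} (F η \ H η)`; moreover the `F η`, `H η` form a
decreasing sequence of closed sets. -/
theorem delta02_difference_hierarchy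
    {X : Type*} [TopologicalSpace X] [PolishSpace X]
    (A : Set X) (hAGδ : IsGδ A) (hAFσ : IsGδ Aᶜ)
    (F H : Ordinal.{0} → Set X)
    (hF0 : F 0 = Set.univ)
    (hH : ∀ η, H η = closure (F η \ A))
    (hFsucc : ∀ η, F (η + 1) = H η ∩ closure (F η ∩ A))
    (hFlim : ∀ lam : Ordinal, Order.IsSuccLimit lam → F lam = ⋂ η < lam, F η) :
    (∃ θ : Ordinal, θ < (Cardinal.aleph 1).ord ∧ F θ = ∅ ∧
        A = ⋃ η < θ, (F η \ H η)) ∧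
      (∀ η, IsClosed (F η) ∧ IsClosed (H η)) ∧
      (∀ η, H η ⊆ F η ∧ F (η + 1) ⊆ H η) ∧
      (∀ η ξ : Ordinal, η ≤ ξ → F ξ ⊆ F η) := by
  have h : IsDifferenceHierarchy A F H := ⟨hF0, hH, hFsucc, hFlim⟩
  obtain ⟨θ, hθ, hstable⟩ := exists_lt_ord_aleph_one_add_one_eq h.isClosed_F h.antitone_F
  have hθ_empty := h.eq_empty_of_add_one_eq hAGδ hAFσ hstable
  exact ⟨⟨θ, hθ, hθ_empty, h.eq_biUnion_diff_of_eq_empty hθ_empty⟩,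
    fun η => ⟨h.isClosed_F η, h.isClosed_H η⟩,
    fun η => ⟨h.H_subset_F η, h.F_add_one_subset_H η⟩,
    fun _ _ hle => h.antitone_F hle⟩
end

section
/- Let X be a Polish space and A ⊆ X a Δ⁰₂ set. Let F_η, H_η be the transfinite sequences defined by the difference-hierarchy recursion: F_0 = X, H_η = closure(F_η \ A), F_{η+1} = H_η ∩ closure(F_η ∩ A), F_λ = ⋂_{η<λ} F_η at limit ordinals λ, and let θ < ω₁ be an ordinal with F_θ = ∅. For each η < θ let P_η and Q_η be perfect sets such that F_η △ P_η and H_η △ Q_η are countable (the perfect kernels of F_η and H_η). Then the symmetric difference A △ ⋃_{η<θ} (P_η \ Q_η) is countable. -/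
/-!
Since `F 0 = X`, `F θ = ∅` and `F` is an intersection at limits, every point of `A` leaves `F`
at some successor step `η + 1` with `η < θ`, which it can only do by lying outside `H η`;
conversely a point of `F η \ H η` lies in `A`, since `F η \ A ⊆ H η`. Hence
`A = ⋃_{η<θ} (F η \ H η)`. Replacing `F η` and `H η` by their perfect kernels changes each piece
by a countable set, and there are only countably many pieces because `θ < ω₁`.
-/

open Set Order

theorem Set.diff_symmDiff_diff_subset {α : Type*} (s t u v : Set α) :
    symmDiff (s \ t) (u \ v) ⊆ symmDiff s u ∪ symmDiff t v := by
  intro x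
  simp only [mem_symmDiff, mem_sdiff, mem_union]
  tauto

namespace Ordinal

theorem countable_Iio_of_lt_aleph_one_ord {θ : Ordinal} (hθ : θ < (Cardinal.aleph 1).ord) :
    (Iio θ).Countable := by
  rw [← Cardinal.le_aleph0_iff_set_countable, Cardinal.mk_Iio_ordinal, Cardinal.lift_le_aleph0]
  exact Cardinal.lt_aleph_one_iff.mp (Cardinal.lt_ord.mp hθ)

theorem exists_mem_notMem_add_one_of_notMem {α : Type*} {F : Ordinal → Set α} {x : α}
    {θ : Ordinal} (h0 : x ∈ F 0) (hlim : ∀ o, IsSuccLimit o → ⋂ η < o, F η ⊆ F o)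
    (hθ : x ∉ F θ) : ∃ η < θ, x ∈ F η ∧ x ∉ F (η + 1) := by
  by_contra! hstep
  have hmem : ∀ η ≤ θ, x ∈ F η := by
    intro η
    induction η using limitRecOn with
    | zero => exact fun _ => h0
    | add_one a ih =>
      intro ha
      have haθ : a < θ := (lt_add_one a).trans_le ha
      exact hstep a haθ (ih haθ.le)
    | limit o ho ih =>
      exact fun hoθ => hlim o ho (mem_iInter₂.2 fun η hη => ih η hη (hη.le.trans hoθ))
  exact hθ (hmem θ le_rfl)

theorem eq_biUnion_diff_of_difference_hierarchy {α : Type*} {A : Set α}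
    {F H : Ordinal → Set α} {θ : Ordinal} (hF0 : F 0 = Set.univ)
    (hH : ∀ η, F η \ A ⊆ H η) (hsucc : ∀ η, H η ∩ (F η ∩ A) ⊆ F (η + 1))
    (hlim : ∀ o, IsSuccLimit o → ⋂ η < o, F η ⊆ F o) (hFθ : F θ = ∅) :
    A = ⋃ η < θ, (F η \ H η) := by
  ext x
  simp only [mem_iUnion₂, mem_sdiff, exists_prop]
  constructor
  · intro hxA
    obtain ⟨η, hηθ, hxF, hxF'⟩ := exists_mem_notMem_add_one_of_notMem
      (hF0 ▸ mem_univ x) hlim (hFθ ▸ notMem_empty x)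
    exact ⟨η, hηθ, hxF, fun hxH => hxF' (hsucc η ⟨hxH, hxF, hxA⟩)⟩
  · rintro ⟨η, -, hxF, hxH⟩
    by_contra hxA
    exact hxH (hH η ⟨hxF, hxA⟩)

end Ordinal

theorem delta02_symmDiff_perfect_selector_countable_general
    {X : Type*} [TopologicalSpace X]
    (A : Set X)
    (F H : Ordinal.{0} → Set X)
    (hF0 : F 0 = Set.univ)
    (hH : ∀ η, H η = closure (F η \ A))
    (hFsucc : ∀ η, F (η + 1) = H η ∩ closure (F η ∩ A))
    (hFlim : ∀ lam : Ordinal, Order.IsSuccLimit lam → F lam = ⋂ η < lam, F η)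
    (θ : Ordinal) (hθ : θ < (Cardinal.aleph 1).ord) (hFθ : F θ = ∅)
    (P Q : Ordinal.{0} → Set X)
    (hP : ∀ η < θ, Perfect (P η) ∧ (symmDiff (F η) (P η)).Countable)
    (hQ : ∀ η < θ, Perfect (Q η) ∧ (symmDiff (H η) (Q η)).Countable) :
    (symmDiff A (⋃ η < θ, (P η \ Q η))).Countable := by
  have hA : A = ⋃ η < θ, (F η \ H η) :=
    Ordinal.eq_biUnion_diff_of_difference_hierarchy hF0
      (fun η => hH η ▸ subset_closure)
      (fun η => hFsucc η ▸ inter_subset_inter_right _ subset_closure)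
      (fun o ho => (hFlim o ho).symm.subset) hFθ
  have hpieces : (⋃ η ∈ Iio θ, (symmDiff (F η) (P η) ∪ symmDiff (H η) (Q η))).Countable :=
    (Ordinal.countable_Iio_of_lt_aleph_one_ord hθ).biUnion fun η hη =>
      (hP η hη).2.union (hQ η hη).2
  refine hpieces.mono ?_
  rw [hA]
  exact biSup_symmDiff_biSup_le.trans
    (iUnion₂_mono fun η _ => diff_symmDiff_diff_subset (F η) (H η) (P η) (Q η))

/-- Let `A` be a Δ⁰₂ set in a Polish space, let `F_η, H_η` be the difference-hierarchy
sequences for `A`, let `θ < ω₁` satisfy `F θ = ∅`, and for `η < θ` let `P_η, Q_η` be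
perfect sets with `F_η △ P_η` and `H_η △ Q_η` countable (the perfect kernels). Then
`A △ ⋃_{η<θ} (P_η \ Q_η)` is countable. -/
theorem delta02_symmDiff_perfect_selector_countable
    {X : Type*} [TopologicalSpace X] [PolishSpace X]
    (A : Set X) (hAGδ : IsGδ A) (hAFσ : IsGδ Aᶜ)
    (F H : Ordinal.{0} → Set X)
    (hF0 : F 0 = Set.univ)
    (hH : ∀ η, H η = closure (F η \ A))
    (hFsucc : ∀ η, F (η + 1) = H η ∩ closure (F η ∩ A))
    (hFlim : ∀ lam : Ordinal, Order.IsSuccLimit lam → F lam = ⋂ η < lam, F η)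
    (θ : Ordinal) (hθ : θ < (Cardinal.aleph 1).ord) (hFθ : F θ = ∅)
    (P Q : Ordinal.{0} → Set X)
    (hP : ∀ η < θ, Perfect (P η) ∧ (symmDiff (F η) (P η)).Countable)
    (hQ : ∀ η < θ, Perfect (Q η) ∧ (symmDiff (H η) (Q η)).Countable) :
    (symmDiff A (⋃ η < θ, (P η \ Q η))).Countable :=
  delta02_symmDiff_perfect_selector_countable_general A F H hF0 hH hFsucc hFlim θ hθ hFθ P Q hP hQ
end
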